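/- arXiv:1412.1797 — 2 statements merged into one kernel-verified Lean document; each statement's English description precedes it below -/
import Mathlib

section
/- For Lipschitz 1-periodic functions x, y : ℝ → ℝ with Fourier coefficients x̂(k), ŷ(k), the following identity holds: (1/4π²)∫₀¹(ẋ² + ẏ²) − (1/2π)∫₀¹(ẏx − ẋy) = Σ_{k∈ℤ} (k² − |k|)(|x̂(k)|² + |ŷ(k)|²) + Σ_{k∈ℤ} |k| · |ŷ(k) + i·sgn(k)·x̂(k)|². -/
/-!
Being Lipschitz, `x` and `y` are absolutely continuous, so integrating by parts against
`e^{-2πiks}` gives `(ẋ)^(k) = 2πik x̂(k)`, the boundary term vanishing by periodicity. Parseval's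
identity in polarised form, `∫ f g = Σ conj f̂(k) ĝ(k)`, then turns the left-hand side into
`Σ k² (|x̂(k)|² + |ŷ(k)|²) + 2k Im(conj x̂(k) ŷ(k))`, and expanding `|ŷ(k) + i sgn(k) x̂(k)|²`
shows that this agrees with the right-hand side term by term.
-/

open Real MeasureTheory Set Complex ComplexConjugate

theorem HasSum.tsum_add_tsum_of_nonneg {ι : Type*} {f g : ι → ℝ} {s : ℝ}
    (hf : ∀ i, 0 ≤ f i) (hg : ∀ i, 0 ≤ g i) (h : HasSum (fun i => f i + g i) s) :
    ∑' i, f i + ∑' i, g i = s := by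
  have hfs : Summable f := .of_nonneg_of_le hf (fun i => le_add_of_nonneg_right (hg i)) h.summable
  have hgs : Summable g := .of_nonneg_of_le hg (fun i => le_add_of_nonneg_left (hf i)) h.summable
  exact (hfs.hasSum.add hgs.hasSum).unique h

theorem ContinuousOn.memLp_restrict_Ioc {E : Type*} [NormedAddCommGroup E] {f : ℝ → E} {a b : ℝ}
    (hf : ContinuousOn f (Icc a b)) (p : ENNReal) : MemLp f p (volume.restrict (Ioc a b)) := by
  obtain ⟨C, hC⟩ := isCompact_Icc.exists_bound_of_continuousOn hf
  exact .of_bound ((hf.mono Ioc_subset_Icc_self).aestronglyMeasurable measurableSet_Ioc) C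
    ((ae_restrict_iff' measurableSet_Ioc).mpr
      (ae_of_all _ fun x hx => hC x (Ioc_subset_Icc_self hx)))

theorem LipschitzWith.memLp_deriv {f : ℝ → ℝ} {K : NNReal} (hf : LipschitzWith K f)
    (μ : Measure ℝ) [IsFiniteMeasure μ] (p : ENNReal) : MemLp (deriv f) p μ :=
  .of_bound (measurable_deriv f).aestronglyMeasurable K
    (ae_of_all _ fun _ => norm_deriv_le_of_lipschitz hf)

theorem AbsolutelyContinuousOnInterval.integral_mul_deriv_eq_deriv_mul_of_contDiff
    {f : ℝ → ℂ} {g : ℝ → ℝ} {a b : ℝ} (hf : ContDiff ℝ 1 f)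
    (hg : AbsolutelyContinuousOnInterval g a b) :
    ∫ x in a..b, f x * deriv g x =
      f b * g b - f a * g a - ∫ x in a..b, deriv f x * g x := by
  have hgc : ContinuousOn (fun x => (g x : ℂ)) (uIcc a b) :=
    continuous_ofReal.comp_continuousOn hg.continuousOn
  have hg' : IntervalIntegrable (fun x => ((deriv g x : ℝ) : ℂ)) volume a b :=
    ⟨hg.intervalIntegrable_deriv.1.ofReal, hg.intervalIntegrable_deriv.2.ofReal⟩
  -- Test the identity against the real and imaginary parts, where it is the real-valued one.
  have key : ∀ L : ℂ →L[ℝ] ℝ, L (∫ x in a..b, f x * deriv g x) =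
      L (f b * g b - f a * g a - ∫ x in a..b, deriv f x * g x) := by
    intro L
    have hLf : ContDiff ℝ 1 (L ∘ f) := L.contDiff.comp hf
    have hderiv : deriv (L ∘ f) = L ∘ deriv f := funext fun x =>
      (L.hasFDerivAt.comp_hasDerivAt x (hf.differentiable one_ne_zero x).hasDerivAt).deriv
    have hmul : ∀ (z : ℂ) (r : ℝ), L (z * r) = L z * r := fun z r => by
      rw [mul_comm, ← real_smul, L.map_smul, smul_eq_mul, mul_comm]
    have h := hLf.contDiffOn.absolutelyContinuousOnInterval.integral_mul_deriv_eq_deriv_mul hg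
    rw [hderiv] at h
    rw [map_sub, map_sub, ← L.intervalIntegral_comp_comm, ← L.intervalIntegral_comp_comm]
    · simpa only [hmul, Function.comp_apply] using h
    · exact ((contDiff_one_iff_deriv.mp hf).2.continuousOn.mul hgc).intervalIntegrable
    · exact hg'.continuousOn_mul hf.continuous.continuousOn
  exact Complex.ext (key reCLM) (key imCLM)

theorem AbsolutelyContinuousOnInterval.fourierCoeffOn_deriv {a b : ℝ} (hab : a < b) {f : ℝ → ℝ}
    (hf : AbsolutelyContinuousOnInterval f a b) (hfab : f a = f b) (n : ℤ) :
    fourierCoeffOn hab (fun x => ((deriv f x : ℝ) : ℂ)) n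
      = 2 * π * I * n / (b - a) * fourierCoeffOn hab (fun x => (f x : ℂ)) n := by
  have : Fact (0 < b - a) := ⟨sub_pos.mpr hab⟩
  simp only [fourierCoeffOn_eq_integral, smul_eq_mul, real_smul]
  set e : ℝ → ℂ := fun x => fourier (-n) (x : AddCircle (b - a))
  have he : deriv e = fun x => -2 * π * I * n / (b - a : ℝ) * e x :=
    funext fun x => (hasDerivAt_fourier_neg (b - a) n x).deriv
  have he_cont : Continuous e := (map_continuous (fourier (-n))).comp (AddCircle.continuous_mk' _)
  have he_diff : ContDiff ℝ 1 e := contDiff_one_iff_deriv.mpr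
    ⟨fun x => (hasDerivAt_fourier_neg (b - a) n x).differentiableAt,
      he ▸ continuous_const.mul he_cont⟩
  have he_per : e b = e a := by
    simpa [e] using congrArg (fourier (-n)) (AddCircle.coe_add_period (b - a) a)
  rw [hf.integral_mul_deriv_eq_deriv_mul_of_contDiff he_diff, he_per, hfab, sub_self, zero_sub, he]
  simp only [mul_assoc, intervalIntegral.integral_const_mul]
  push_cast
  ring

theorem hasSum_conj_fourierCoeffOn_mul {a b : ℝ} {f g : ℝ → ℂ} (hab : a < b)
    (hf : MemLp f 2 (volume.restrict (Ioc a b))) (hg : MemLp g 2 (volume.restrict (Ioc a b))) :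
    HasSum (fun i => conj (fourierCoeffOn hab f i) * fourierCoeffOn hab g i)
      ((b - a)⁻¹ • ∫ x in a..b, conj (f x) * g x) := by
  have := Fact.mk (sub_pos.mpr hab)
  have hb : a + (b - a) = b := add_sub_cancel a b
  rw [← hb] at hf hg
  have hF := hf.memLp_liftIoc.haarAddCircle
  have hG := hg.memLp_liftIoc.haarAddCircle
  have hcoeff : ∀ {F : ℝ → ℂ} (hF : MemLp (AddCircle.liftIoc (b - a) a F) 2 AddCircle.haarAddCircle)
      (i : ℤ), inner ℂ (fourierBasis i) hF.toLp = fourierCoeffOn hab F i := by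
    intro F hF i
    rw [← HilbertBasis.repr_apply_apply, fourierBasis_repr, fourierCoeff_congr_ae hF.coeFn_toLp,
      fourierCoeff_liftIoc_eq]
    congr 1
  have hinner : inner ℂ hF.toLp hG.toLp = (b - a)⁻¹ • ∫ x in a..b, conj (f x) * g x := by
    have h := AddCircle.integral_liftIoc_eq_intervalIntegral (b - a) (t := a)
      (f := fun x => conj (f x) * g x)
    rw [hb] at h
    rw [L2.inner_def, ← h, ← AddCircle.integral_haarAddCircle]
    refine integral_congr_ae ?_
    filter_upwards [hF.coeFn_toLp, hG.coeFn_toLp] with t hFt hGt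
    rw [hFt, hGt, RCLike.inner_apply, mul_comm]
    rfl
  rw [← hinner]
  refine (fourierBasis.hasSum_inner_mul_inner hF.toLp hG.toLp).congr_fun fun i => ?_
  rw [← inner_conj_symm, hcoeff, hcoeff]

theorem fourierCoeffOn_zero_lt_one (f : ℝ → ℂ) (k : ℤ) :
    fourierCoeffOn (zero_lt_one' ℝ) f k = ∫ s in (0:ℝ)..1, f s * exp (-(2 * π * I * k * s)) := by
  simp only [fourierCoeffOn_eq_integral, fourier_coe_apply, sub_zero, div_one, one_smul,
    smul_eq_mul]
  push_cast
  simp_rw [mul_comm (f _)]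
  ring_nf

theorem AbsolutelyContinuousOnInterval.hasSum_integral_deriv_sq {f : ℝ → ℝ}
    (hf : AbsolutelyContinuousOnInterval f 0 1) (hf01 : f 0 = f 1)
    (hf' : MemLp (deriv f) 2 (volume.restrict (Ioc 0 1))) :
    HasSum (fun k : ℤ =>
        (2 * π * k) ^ 2 * ‖fourierCoeffOn (zero_lt_one' ℝ) (fun s => (f s : ℂ)) k‖ ^ 2)
      (∫ s in (0:ℝ)..1, deriv f s ^ 2) := by
  have hL2 : MemLp (fun s => ((deriv f s : ℝ) : ℂ)) 2 (volume.restrict (Ioc 0 1)) := hf'.ofReal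
  have h := hasSum_sq_fourierCoeffOn (zero_lt_one' ℝ) hL2
  simp only [hf.fourierCoeffOn_deriv (zero_lt_one' ℝ) hf01, sub_zero, inv_one, one_smul,
    norm_real, norm_mul, mul_pow, sq_abs, Real.norm_eq_abs] at h
  convert h using 3 with k
  simp [abs_of_pos pi_pos, mul_pow]

theorem AbsolutelyContinuousOnInterval.hasSum_integral_mul_deriv {f g : ℝ → ℝ}
    (hf : ContinuousOn f (Icc 0 1)) (hg : AbsolutelyContinuousOnInterval g 0 1) (hg01 : g 0 = g 1)
    (hg' : MemLp (deriv g) 2 (volume.restrict (Ioc 0 1))) :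
    HasSum (fun k : ℤ =>
        -(2 * π * k) * (conj (fourierCoeffOn (zero_lt_one' ℝ) (fun s => (f s : ℂ)) k)
          * fourierCoeffOn (zero_lt_one' ℝ) (fun s => (g s : ℂ)) k).im)
      (∫ s in (0:ℝ)..1, f s * deriv g s) := by
  have hfL2 : MemLp (fun s => (f s : ℂ)) 2 (volume.restrict (Ioc 0 1)) :=
    (continuous_ofReal.comp_continuousOn hf).memLp_restrict_Ioc 2
  have hgL2 : MemLp (fun s => ((deriv g s : ℝ) : ℂ)) 2 (volume.restrict (Ioc 0 1)) := hg'.ofReal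
  have h := Complex.hasSum_re <| hasSum_conj_fourierCoeffOn_mul (zero_lt_one' ℝ) hfL2 hgL2
  simp only [hg.fourierCoeffOn_deriv (zero_lt_one' ℝ) hg01, sub_zero, inv_one, one_smul,
    conj_ofReal, ← ofReal_mul, intervalIntegral.integral_ofReal, ofReal_re, ofReal_one, ofReal_zero,
    div_one] at h
  convert h using 2 with k
  simp only [mul_re, mul_im, conj_re, conj_im, I_re, I_im, ofReal_re, ofReal_im, intCast_re,
    intCast_im, re_ofNat, im_ofNat]
  ring

theorem hasSum_hurwitz {x y : ℝ → ℝ}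
    (hx : AbsolutelyContinuousOnInterval x 0 1) (hy : AbsolutelyContinuousOnInterval y 0 1)
    (hx01 : x 0 = x 1) (hy01 : y 0 = y 1)
    (hx' : MemLp (deriv x) 2 (volume.restrict (Ioc 0 1)))
    (hy' : MemLp (deriv y) 2 (volume.restrict (Ioc 0 1))) :
    HasSum (fun k : ℤ =>
        (k : ℝ) ^ 2 * (‖fourierCoeffOn (zero_lt_one' ℝ) (fun s => (x s : ℂ)) k‖ ^ 2
          + ‖fourierCoeffOn (zero_lt_one' ℝ) (fun s => (y s : ℂ)) k‖ ^ 2)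
        + 2 * k * (conj (fourierCoeffOn (zero_lt_one' ℝ) (fun s => (x s : ℂ)) k)
          * fourierCoeffOn (zero_lt_one' ℝ) (fun s => (y s : ℂ)) k).im)
      ((1 / (4 * π ^ 2)) * (∫ s in (0:ℝ)..1, ((deriv x s) ^ 2 + (deriv y s) ^ 2))
        - (1 / (2 * π)) * (∫ s in (0:ℝ)..1, (deriv y s * x s - deriv x s * y s))) := by
  have hxc : ContinuousOn x (Icc 0 1) := hx.continuousOn.mono Icc_subset_uIcc
  have hyc : ContinuousOn y (Icc 0 1) := hy.continuousOn.mono Icc_subset_uIcc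
  have hsq_integrable : ∀ {f : ℝ → ℝ}, MemLp f 2 (volume.restrict (Ioc 0 1)) →
      IntervalIntegrable (fun s => f s ^ 2) volume 0 1 := fun hf =>
    (intervalIntegrable_iff_integrableOn_Ioc_of_le zero_le_one).mpr hf.integrable_sq
  have hxdy : IntervalIntegrable (fun s => deriv y s * x s) volume 0 1 :=
    hy.intervalIntegrable_deriv.mul_continuousOn hx.continuousOn
  have hydx : IntervalIntegrable (fun s => deriv x s * y s) volume 0 1 :=
    hx.intervalIntegrable_deriv.mul_continuousOn hy.continuousOn
  have hconj : ∀ z w : ℂ, (conj w * z).im = -(conj z * w).im := fun z w => by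
    rw [← conj_conj z, ← map_mul, conj_im, conj_conj, mul_comm]
  have h := ((hx.hasSum_integral_deriv_sq hx01 hx').add (hy.hasSum_integral_deriv_sq hy01 hy')
    |>.mul_left (1 / (4 * π ^ 2))).sub
    ((hy.hasSum_integral_mul_deriv hxc hy01 hy').sub (hx.hasSum_integral_mul_deriv hyc hx01 hx')
    |>.mul_left (1 / (2 * π)))
  rw [intervalIntegral.integral_add (hsq_integrable hx') (hsq_integrable hy'), intervalIntegral.integral_sub hxdy hydx]
  simp only [mul_comm (deriv _ _)]
  refine h.congr_fun fun k => ?_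
  rw [hconj]
  field_simp
  ring

theorem hurwitz_summand_eq (k : ℤ) (a b : ℂ) :
    ((k : ℝ) ^ 2 - |(k : ℝ)|) * (‖a‖ ^ 2 + ‖b‖ ^ 2)
      + |(k : ℝ)| * ‖b + I * (Int.sign k : ℂ) * a‖ ^ 2
    = (k : ℝ) ^ 2 * (‖a‖ ^ 2 + ‖b‖ ^ 2) + 2 * k * (conj a * b).im := by
  rcases eq_or_ne k 0 with rfl | hk
  · simp
  have hsign : ((Int.sign k : ℤ) : ℝ) ^ 2 = 1 := by
    rcases hk.lt_or_gt with h | h <;> simp [Int.sign_eq_neg_one_of_neg, Int.sign_eq_one_of_pos, h]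
  have habs : ((Int.sign k : ℤ) : ℝ) * |(k : ℝ)| = k := by exact_mod_cast Int.sign_mul_abs k
  have hnorm : ‖b + I * (Int.sign k : ℂ) * a‖ ^ 2
      = ‖a‖ ^ 2 + ‖b‖ ^ 2 + 2 * (Int.sign k : ℝ) * (conj a * b).im := by
    simp only [Complex.sq_norm, normSq_apply, add_re, add_im, mul_re, mul_im, I_re, I_im,
      intCast_re, intCast_im, conj_re, conj_im]
    linear_combination (a.re ^ 2 + a.im ^ 2) * hsign
  rw [hnorm]
  linear_combination (2 * (conj a * b).im) * habs

/-- Hurwitz's Fourier-series identity: the difference between the normalized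
length-squared and the normalized signed area of a closed Lipschitz planar
curve equals a sum of explicit nonnegative terms in the Fourier coefficients. -/
theorem hurwitz_identity
    (x y : ℝ → ℝ) (Kx Ky : NNReal)
    (hx : LipschitzWith Kx x) (hy : LipschitzWith Ky y)
    (hxper : ∀ s, x (s + 1) = x s) (hyper : ∀ s, y (s + 1) = y s)
    (xhat yhat : ℤ → ℂ)
    (hxhat : ∀ k, xhat k
      = ∫ s in (0:ℝ)..1, Complex.ofReal (x s) * Complex.exp (-(2 * (π:ℂ) * Complex.I * k * s)))
    (hyhat : ∀ k, yhat k
      = ∫ s in (0:ℝ)..1, Complex.ofReal (y s) * Complex.exp (-(2 * (π:ℂ) * Complex.I * k * s))) :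
    (1 / (4 * π ^ 2)) * (∫ s in (0:ℝ)..1, ((deriv x s) ^ 2 + (deriv y s) ^ 2))
      - (1 / (2 * π)) * (∫ s in (0:ℝ)..1, (deriv y s * x s - deriv x s * y s))
    = (∑' k : ℤ, ((k : ℝ) ^ 2 - |(k : ℝ)|) * (‖xhat k‖ ^ 2 + ‖yhat k‖ ^ 2))
      + ∑' k : ℤ, |(k : ℝ)| *
          ‖yhat k + Complex.I * (Int.sign k : ℂ) * xhat k‖ ^ 2 := by
  obtain rfl : xhat = fourierCoeffOn (zero_lt_one' ℝ) (fun s => (x s : ℂ)) :=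
    funext fun k => by rw [hxhat, fourierCoeffOn_zero_lt_one]
  obtain rfl : yhat = fourierCoeffOn (zero_lt_one' ℝ) (fun s => (y s : ℂ)) :=
    funext fun k => by rw [hyhat, fourierCoeffOn_zero_lt_one]
  have habs : ∀ k : ℤ, |(k : ℝ)| ≤ (k : ℝ) ^ 2 := fun k => by
    exact_mod_cast Int.natCast_natAbs k ▸ Int.natAbs_le_self_sq k
  refine (HasSum.tsum_add_tsum_of_nonneg (fun k => ?_) (fun k => by positivity) ?_).symm
  · exact mul_nonneg (sub_nonneg.mpr (habs k)) (by positivity)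
  · simp only [hurwitz_summand_eq]
    exact hasSum_hurwitz hx.lipschitzOnWith.absolutelyContinuousOnInterval
      hy.lipschitzOnWith.absolutelyContinuousOnInterval (by simpa using (hxper 0).symm)
      (by simpa using (hyper 0).symm) (hx.memLp_deriv _ 2) (hy.memLp_deriv _ 2)
end

section
/- The function H(s) = (2π/(1 − cos(2πs)))·(s − sin(2πs)/(2π)), defined for s ∈ (0,1), is a strictly increasing bijection (indeed a diffeomorphism) from (0,1) onto (0,∞). -/
/-! Substituting `t = 2πs` turns `H` into `G t = (t - sin t) / (1 - cos t)` (`cycloidRatio`)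
on `(0, 2π)`. The numerator of `G'` is
`2 (1 - cos t) - t sin t = 4 sin (t/2) (sin (t/2) - (t/2) cos (t/2))`, which is positive because
`v cos v < sin v` on `(0, π)`. The same inequality gives `0 < G t < t` near `0`, so `G → 0` there,
while `G → ∞` at `2π` since the numerator tends to `2π` and the denominator to `0⁺`. The
intermediate value theorem then makes `G` onto `(0, ∞)`. -/

open Real Set Filter Topology

section IntermediateValue

variable {α δ : Type*} [ConditionallyCompleteLinearOrder α] [TopologicalSpace α] [OrderTopology α]
  [DenselyOrdered α] [LinearOrder δ] [TopologicalSpace δ] [OrderTopology δ]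

theorem ContinuousOn.surjOn_Ioi_of_tendsto {f : α → δ} {a b : α} {c : δ} (hab : a < b)
    (hf : ContinuousOn f (Ioo a b)) (ha : Tendsto f (𝓝[>] a) (𝓝 c))
    (hb : Tendsto f (𝓝[<] b) atTop) : SurjOn f (Ioo a b) (Ioi c) := by
  intro y (hy : c < y)
  have := nhdsGT_neBot_of_exists_gt ⟨b, hab⟩
  have := nhdsLT_neBot_of_exists_lt ⟨a, hab⟩
  obtain ⟨x₁, hfx₁, hx₁⟩ :=
    ((ha.eventually (gt_mem_nhds hy)).and (Ioo_mem_nhdsGT hab)).exists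
  obtain ⟨x₂, hfx₂, hx₂⟩ :=
    ((hb.eventually (eventually_ge_atTop y)).and (Ioo_mem_nhdsLT hab)).exists
  exact hf.surjOn_Icc hx₁ hx₂ ⟨hfx₁.le, hfx₂⟩

end IntermediateValue

namespace Real

theorem mul_cos_lt_sin {x : ℝ} (h0 : 0 < x) (h1 : x < π) : x * cos x < sin x := by
  rcases lt_or_ge x (π / 2) with hx | hx
  · have hcos : 0 < cos x := cos_pos_of_mem_Ioo ⟨by linarith, hx⟩
    have htan := lt_tan h0 hx
    rwa [tan_eq_sin_div_cos, lt_div_iff₀ hcos] at htan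
  · have hcos : cos x ≤ 0 := cos_nonpos_of_pi_div_two_le_of_le hx (by linarith)
    nlinarith [sin_pos_of_pos_of_lt_pi h0 h1]

theorem one_sub_cos_pos {x : ℝ} (h0 : 0 < x) (h1 : x < 2 * π) : 0 < 1 - cos x := by
  have hne : cos x ≠ 1 := fun h =>
    h0.ne' ((cos_eq_one_iff_of_lt_of_lt (by linarith) h1).1 h)
  linarith [lt_of_le_of_ne (cos_le_one x) hne]

theorem mul_sin_lt_two_mul_one_sub_cos {x : ℝ} (h0 : 0 < x) (h1 : x < 2 * π) :
    x * sin x < 2 * (1 - cos x) := by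
  set v := x / 2
  have hx : x = 2 * v := by ring
  have hv := mul_cos_lt_sin (x := v) (by linarith) (by linarith)
  have hsin : 0 < sin v := sin_pos_of_pos_of_lt_pi (by linarith) (by linarith)
  rw [hx, sin_two_mul, cos_two_mul]
  nlinarith [sin_sq_add_cos_sq v]

end Real

/-- `x / y` along the cycloid `x = t - sin t`, `y = 1 - cos t`. -/
noncomputable def cycloidRatio (t : ℝ) : ℝ := (t - sin t) / (1 - cos t)

theorem hasDerivAt_cycloidRatio {t : ℝ} (ht : cos t ≠ 1) :
    HasDerivAt cycloidRatio ((2 * (1 - cos t) - t * sin t) / (1 - cos t) ^ 2) t := by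
  have hden : 1 - cos t ≠ 0 := sub_ne_zero.2 ht.symm
  have h := ((hasDerivAt_id t).sub (hasDerivAt_sin t)).div
    ((hasDerivAt_const t (1 : ℝ)).sub (hasDerivAt_cos t)) hden
  refine h.congr_deriv ?_
  simp only [Pi.sub_apply, id]
  field_simp
  linear_combination sin_sq_add_cos_sq t

theorem cycloidRatio_pos {t : ℝ} (h0 : 0 < t) (h1 : t < 2 * π) : 0 < cycloidRatio t :=
  div_pos (sub_pos.2 (sin_lt h0)) (one_sub_cos_pos h0 h1)

theorem cycloidRatio_lt_self {t : ℝ} (h0 : 0 < t) (h1 : t < π) : cycloidRatio t < t := by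
  rw [cycloidRatio, div_lt_iff₀ (one_sub_cos_pos h0 (by linarith [pi_pos]))]
  linarith [mul_cos_lt_sin h0 h1]

theorem hasDerivAt_cycloidRatio_of_mem_Ioo {t : ℝ} (ht : t ∈ Ioo 0 (2 * π)) :
    HasDerivAt cycloidRatio ((2 * (1 - cos t) - t * sin t) / (1 - cos t) ^ 2) t :=
  hasDerivAt_cycloidRatio (sub_pos.1 (one_sub_cos_pos ht.1 ht.2)).ne

theorem deriv_cycloidRatio_pos {t : ℝ} (ht : t ∈ Ioo 0 (2 * π)) : 0 < deriv cycloidRatio t := by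
  rw [(hasDerivAt_cycloidRatio_of_mem_Ioo ht).deriv]
  exact div_pos (sub_pos.2 (mul_sin_lt_two_mul_one_sub_cos ht.1 ht.2))
    (pow_pos (one_sub_cos_pos ht.1 ht.2) 2)

theorem continuousOn_cycloidRatio : ContinuousOn cycloidRatio (Ioo 0 (2 * π)) := fun _ ht =>
  (hasDerivAt_cycloidRatio_of_mem_Ioo ht).continuousAt.continuousWithinAt

theorem strictMonoOn_cycloidRatio : StrictMonoOn cycloidRatio (Ioo 0 (2 * π)) :=
  strictMonoOn_of_deriv_pos (convex_Ioo 0 _) continuousOn_cycloidRatio fun _ ht =>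
    deriv_cycloidRatio_pos (by rwa [interior_Ioo] at ht)

theorem tendsto_cycloidRatio_nhdsGT_zero : Tendsto cycloidRatio (𝓝[>] 0) (𝓝 0) := by
  have hnear : Ioo 0 π ∈ 𝓝[>] (0 : ℝ) := Ioo_mem_nhdsGT pi_pos
  refine tendsto_of_tendsto_of_tendsto_of_le_of_le' tendsto_const_nhds
    (tendsto_nhdsWithin_of_tendsto_nhds tendsto_id) ?_ ?_
  · filter_upwards [hnear] with t ht
    exact (cycloidRatio_pos ht.1 (by linarith [ht.2, pi_pos])).le
  · filter_upwards [hnear] with t ht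
    exact (cycloidRatio_lt_self ht.1 ht.2).le

theorem tendsto_cycloidRatio_nhdsLT_two_pi : Tendsto cycloidRatio (𝓝[<] (2 * π)) atTop := by
  have hnum : Tendsto (fun t => t - sin t) (𝓝[<] (2 * π)) (𝓝 (2 * π)) := by
    refine tendsto_nhdsWithin_of_tendsto_nhds ((continuous_id.sub continuous_sin).tendsto' _ _ ?_)
    simp
  have hden : Tendsto (fun t => 1 - cos t) (𝓝[<] (2 * π)) (𝓝[>] 0) := by
    refine tendsto_nhdsWithin_iff.2 ⟨?_, ?_⟩
    · refine tendsto_nhdsWithin_of_tendsto_nhds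
        ((continuous_const.sub continuous_cos).tendsto' _ _ ?_)
      simp
    · filter_upwards [Ioo_mem_nhdsLT two_pi_pos] with t ht
      exact one_sub_cos_pos ht.1 ht.2
  exact hnum.pos_mul_atTop two_pi_pos (tendsto_inv_nhdsGT_zero.comp hden)

theorem bijOn_cycloidRatio : BijOn cycloidRatio (Ioo 0 (2 * π)) (Ioi 0) :=
  ⟨fun _ ht => cycloidRatio_pos ht.1 ht.2, strictMonoOn_cycloidRatio.injOn,
    continuousOn_cycloidRatio.surjOn_Ioi_of_tendsto two_pi_pos tendsto_cycloidRatio_nhdsGT_zero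
      tendsto_cycloidRatio_nhdsLT_two_pi⟩

/-- The function `H(s) = (2π/(1 − cos 2πs))·(s − sin(2πs)/(2π))` is a strictly
increasing differentiable bijection from `(0,1)` onto `(0,∞)` with nonvanishing
derivative. -/
theorem H_strictMono_bijOn_diffeo
    (H : ℝ → ℝ)
    (hH : ∀ s, H s = (2 * π / (1 - Real.cos (2 * π * s))) * (s - Real.sin (2 * π * s) / (2 * π))) :
    StrictMonoOn H (Set.Ioo 0 1) ∧
    Set.BijOn H (Set.Ioo 0 1) (Set.Ioi 0) ∧
    (∀ s ∈ Set.Ioo (0:ℝ) 1, DifferentiableAt ℝ H s ∧ deriv H s ≠ 0) := by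
  obtain rfl : H = fun s => cycloidRatio (2 * π * s) := funext fun s => by
    rw [hH, cycloidRatio, div_mul_eq_mul_div, mul_sub, mul_div_cancel₀ _ two_pi_pos.ne']
  have hscale : BijOn (2 * π * ·) (Ioo 0 1) (Ioo 0 (2 * π)) := by
    simpa [image_mul_left_Ioo two_pi_pos] using
      (mul_right_injective₀ two_pi_pos.ne').injOn.bijOn_image (s := Ioo (0 : ℝ) 1)
  refine ⟨strictMonoOn_cycloidRatio.comp ((strictMono_mul_left_of_pos two_pi_pos).strictMonoOn _)
    hscale.mapsTo, bijOn_cycloidRatio.comp hscale, fun s hs => ⟨?_, ?_⟩⟩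
  · exact (hasDerivAt_cycloidRatio_of_mem_Ioo (hscale.mapsTo hs)).differentiableAt.comp s
      (differentiableAt_id.const_mul _)
  · rw [deriv_comp_mul_left, smul_eq_mul]
    exact mul_ne_zero two_pi_pos.ne' (deriv_cycloidRatio_pos (hscale.mapsTo hs)).ne'
end
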